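/- Branch soundness for high guards: suppose the guard b has type t (join of labels of its free variables), both branches P and Q, typed with counter level t ⊔ τ, have semantics that leave every variable with final label ⊏ t ⊔ τ unchanged and whose final stores restricted to labels ⊏ t are independent of the initial high values; then for any two initial configurations that are (Ξ, t')-equivalent with t ⋢ t' (so the guard may differ), executing the branch P ◁ b ▷ Q from each yields (Ξ', t')-equivalent final configurations, where Ξ' = Ξ'_P ⊔ Ξ'_Q, provided every variable assigned in P or Q has Ξ'-label ⊒ t ⊔ τ. -/
import Mathlib

/-- Branch soundness for high guards.

`b` is the guard's semantics, `fP`, `fQ` the semantics of the two branches,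
`AP`, `AQ` the sets of variables possibly assigned in `P` resp. `Q`,
`Ξ` the initial environment and `Ξ'` the final environment of rule `t-branch`.
If the guard has type `t`, every variable assigned in either branch has
`Ξ'`-label `⊒ t ⊔ τ`, and `t ⋢ t'`, then two `(Ξ,t')`-equivalent initial
stores (whose guard values may differ) yield `(Ξ',t')`-equivalent final
stores after executing `P ◁ b ▷ Q`. -/
theorem branch_sound_high_guard {Var L : Type} [Lattice L]
    (Ξ Ξ' : Var → L) (t τ t' : L)
    (b : (Var → ℤ) → Bool) (fP fQ : (Var → ℤ) → (Var → ℤ))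
    (AP AQ : Set Var)
    -- branches only change their assigned variables
    (hAP : ∀ σ x, x ∉ AP → fP σ x = σ x)
    (hAQ : ∀ σ x, x ∉ AQ → fQ σ x = σ x)
    -- every variable assigned in P or Q has Ξ'-label ⊒ t ⊔ τ
    (hhigh : ∀ x ∈ AP ∪ AQ, t ⊔ τ ≤ Ξ' x)
    -- Ξ ⊑ Ξ' pointwise
    (hΞ : Ξ ≤ Ξ')
    -- the guard's level is not below the observer's level
    (ht : ¬ t ≤ t')
    (σ₁ σ₂ : Var → ℤ)
    -- initial (Ξ,t')-equivalence
    (hinit : ∀ x, Ξ x ≤ t' → σ₁ x = σ₂ x) :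
    -- final (Ξ',t')-equivalence of the branch executions
    ∀ x, Ξ' x ≤ t' →
      (if b σ₁ then fP σ₁ else fQ σ₁) x = (if b σ₂ then fP σ₂ else fQ σ₂) x := by
  intro x hx
  have hnot : x ∉ AP ∪ AQ := fun hmem =>
    ht (le_trans (le_trans le_sup_left (hhigh x hmem)) hx)
  have hP : x ∉ AP := fun h => hnot (Or.inl h)
  have hQ : x ∉ AQ := fun h => hnot (Or.inr h)
  have hσ : σ₁ x = σ₂ x := hinit x (le_trans (hΞ x) hx)
  by_cases h1 : b σ₁ <;> by_cases h2 : b σ₂ <;>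
    simp [h1, h2, hAP _ _ hP, hAQ _ _ hQ, hσ]
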